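/- Let J be an integrable almost complex structure on a differential *-calculus (Ω•A, d, *). Then ∂ and ∂̄ are super-derivations: for ξ ∈ Ω^{p,q}A and η ∈ Ω^{p',q'}A one has ∂(ξ∧η) = ∂ξ ∧ η + (−1)^{p+q} ξ ∧ ∂η and ∂̄(ξ∧η) = ∂̄ξ ∧ η + (−1)^{p+q} ξ ∧ ∂̄η. -/
import Mathlib


noncomputable section

open scoped TensorProduct

/-- A differential `*`-calculus `(Ω•A, d, *)` on the `*`-algebra `A = G 0`:
an ℕ-graded associative ℂ-algebra `Ω` with `Ω⁰A = A = G 0`, generation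
`Ωⁿ⁺¹A = A·d(ΩⁿA)`, a degree-one differential `d` with `d² = 0` satisfying the graded
Leibniz rule, and a grade-preserving conjugate-linear involution `starOp` such that
`(dξ)* = d(ξ*)` and `(ξ∧η)* = (−1)^{|ξ||η|} η*∧ξ*` for homogeneous `ξ`, `η`. -/
structure DiffStarCalc (Ω : Type*) [Ring Ω] [Algebra ℂ Ω] where
  /-- the grading: `G n` is the space of `n`-forms `ΩⁿA`; `G 0 = A`. -/
  G : ℕ → Submodule ℂ Ω
  internal : DirectSum.IsInternal G
  one_mem : (1 : Ω) ∈ G 0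
  mul_mem : ∀ {m n : ℕ} {x y : Ω}, x ∈ G m → y ∈ G n → x * y ∈ G (m + n)
  /-- the differential -/
  d : Ω →ₗ[ℂ] Ω
  d_mem : ∀ (n : ℕ), ∀ x ∈ G n, d x ∈ G (n + 1)
  d_d : ∀ x : Ω, d (d x) = 0
  leibniz : ∀ (n : ℕ), ∀ x ∈ G n, ∀ y : Ω,
      d (x * y) = d x * y + ((-1 : ℂ) ^ n) • (x * d y)
  gen : ∀ n : ℕ, G (n + 1) ≤ Submodule.span ℂ {z : Ω | ∃ a ∈ G 0, ∃ x ∈ G n, z = a * d x}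
  /-- the `*`-operation -/
  starOp : Ω → Ω
  starOp_add : ∀ x y : Ω, starOp (x + y) = starOp x + starOp y
  starOp_smul : ∀ (c : ℂ) (x : Ω), starOp (c • x) = (starRingEnd ℂ) c • starOp x
  starOp_starOp : ∀ x : Ω, starOp (starOp x) = x
  starOp_mem : ∀ (n : ℕ), ∀ x ∈ G n, starOp x ∈ G n
  starOp_mul : ∀ (m n : ℕ), ∀ x ∈ G m, ∀ y ∈ G n,
      starOp (x * y) = ((-1 : ℂ) ^ (m * n)) • (starOp y * starOp x)
  starOp_d : ∀ x : Ω, starOp (d x) = d (starOp x)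

/-- An almost complex structure on a differential `*`-calculus: a degree-zero
ℂ-linear derivation `J` of `Ω•A` vanishing on `A = G 0`, with `J² = −1` on `Ω¹A = G 1`
and `J(ξ*) = (Jξ)*` for `ξ ∈ Ω¹A`. -/
structure AlmostComplexCalc (Ω : Type*) [Ring Ω] [Algebra ℂ Ω] extends DiffStarCalc Ω where
  /-- the almost complex structure -/
  J : Ω →ₗ[ℂ] Ω
  J_mem : ∀ (n : ℕ), ∀ x ∈ G n, J x ∈ G n
  J_deriv : ∀ x y : Ω, J (x * y) = J x * y + x * J y
  J_zero : ∀ x ∈ G 0, J x = 0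
  J_sq : ∀ x ∈ G 1, J (J x) = -x
  J_star : ∀ x ∈ G 1, J (starOp x) = starOp (J x)

namespace AlmostComplexCalc

variable {Ω : Type*} [Ring Ω] [Algebra ℂ Ω]

/-- The space of `(p,q)`-forms `Ω^{p,q}A := {ξ ∈ Ω^{p+q}A : Jξ = (p−q)·i·ξ}`. -/
def pq (C : AlmostComplexCalc Ω) (p q : ℕ) : Submodule ℂ Ω where
  carrier := {x | x ∈ C.G (p + q) ∧ C.J x = (((p : ℂ) - (q : ℂ)) * Complex.I) • x}
  add_mem' := by
    rintro x y ⟨hx1, hx2⟩ ⟨hy1, hy2⟩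
    refine ⟨(C.G (p + q)).add_mem hx1 hy1, ?_⟩
    rw [map_add, hx2, hy2, smul_add]
  zero_mem' := ⟨(C.G (p + q)).zero_mem, by rw [map_zero, smul_zero]⟩
  smul_mem' := by
    rintro c x ⟨hx1, hx2⟩
    refine ⟨(C.G (p + q)).smul_mem c hx1, ?_⟩
    rw [map_smul, hx2, smul_comm]

theorem mem_pq {C : AlmostComplexCalc Ω} {p q : ℕ} {x : Ω} :
    x ∈ C.pq p q ↔ x ∈ C.G (p + q) ∧ C.J x = (((p : ℂ) - (q : ℂ)) * Complex.I) • x :=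
  Iff.rfl

/-- Integrability of the almost complex structure:
`d(Ω^{1,0}A) ⊆ Ω^{2,0}A ⊕ Ω^{1,1}A`. -/
def Integrable (C : AlmostComplexCalc Ω) : Prop :=
  ∀ ω ∈ C.pq 1 0, C.d ω ∈ C.pq 2 0 ⊔ C.pq 1 1

end AlmostComplexCalc

/-- An almost complex structure together with the projections
`π^{p,q} : Ω^{p+q}A → Ω^{p,q}A` realizing the direct sum decomposition
`ΩⁿA = ⊕_{p+q=n} Ω^{p,q}A`. -/
structure ProjCalc (Ω : Type*) [Ring Ω] [Algebra ℂ Ω] extends AlmostComplexCalc Ω where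
  /-- the projection onto the `(p,q)`-summand -/
  π : ℕ → ℕ → (Ω →ₗ[ℂ] Ω)
  π_mem_grade : ∀ (p q : ℕ) (x : Ω), π p q x ∈ G (p + q)
  π_eigen : ∀ (p q : ℕ) (x : Ω),
      J (π p q x) = (((p : ℂ) - (q : ℂ)) * Complex.I) • π p q x
  π_eq_self : ∀ (p q : ℕ), ∀ x ∈ G (p + q),
      J x = (((p : ℂ) - (q : ℂ)) * Complex.I) • x → π p q x = x
  π_zero_of_ne : ∀ (p q n : ℕ), n ≠ p + q → ∀ x ∈ G n, π p q x = 0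
  π_orth : ∀ (p q p' q' : ℕ), (p, q) ≠ (p', q') → ∀ x ∈ G (p' + q'),
      J x = (((p' : ℂ) - (q' : ℂ)) * Complex.I) • x → π p q x = 0
  π_sum : ∀ (n : ℕ), ∀ x ∈ G n, x = ∑ k ∈ Finset.range (n + 1), π k (n - k) x

namespace ProjCalc

variable {Ω : Type*} [Ring Ω] [Algebra ℂ Ω]

theorem pq_mul (C : ProjCalc Ω) {a b a' b' : ℕ} {x y : Ω}
    (hx : x ∈ C.pq a b) (hy : y ∈ C.pq a' b') :
    x * y ∈ C.pq (a + a') (b + b') := by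
  obtain ⟨hx1, hx2⟩ := hx
  obtain ⟨hy1, hy2⟩ := hy
  constructor
  · have h := C.mul_mem hx1 hy1
    have he : a + b + (a' + b') = a + a' + (b + b') := by ring
    rwa [he] at h
  · rw [C.J_deriv, hx2, hy2, smul_mul_assoc, mul_smul_comm, ← add_smul]
    congr 1
    push_cast
    ring

theorem π_pq_eq (C : ProjCalc Ω) {a b : ℕ} {x : Ω} (hx : x ∈ C.pq a b) :
    C.π a b x = x := C.π_eq_self a b x hx.1 hx.2

theorem π_pq_ne (C : ProjCalc Ω) {P Q a b : ℕ} {x : Ω} (hx : x ∈ C.pq a b)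
    (h : (P, Q) ≠ (a, b)) : C.π P Q x = 0 := C.π_orth P Q a b h x hx.1 hx.2

theorem π_mem_pq (C : ProjCalc Ω) (p q : ℕ) (x : Ω) : C.π p q x ∈ C.pq p q :=
  ⟨C.π_mem_grade p q x, C.π_eigen p q x⟩

/-- Projection of a product (homogeneous `w` on the left). -/
theorem π_mul_right (C : ProjCalc Ω) {N P Q a' b' : ℕ} {w y : Ω}
    (hw : w ∈ C.G N) (hy : y ∈ C.pq a' b') {k0 M : ℕ} (hk0 : k0 ≤ N)
    (hM : M = N - k0) (heq1 : P = k0 + a') (heq2 : Q = (N - k0) + b')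
    (hne : ∀ k ≤ N, k ≠ k0 → (P, Q) ≠ (k + a', (N - k) + b')) :
    C.π P Q (w * y) = C.π k0 M w * y := by
  subst hM
  have hdec := C.π_sum N w hw
  calc C.π P Q (w * y)
      = C.π P Q ((∑ k ∈ Finset.range (N + 1), C.π k (N - k) w) * y) := by rw [← hdec]
    _ = ∑ k ∈ Finset.range (N + 1), C.π P Q (C.π k (N - k) w * y) := by
        rw [Finset.sum_mul, map_sum]
    _ = C.π k0 (N - k0) w * y := by
        rw [Finset.sum_eq_single k0]
        · subst heq1 heq2
          exact C.π_pq_eq (C.pq_mul (C.π_mem_pq k0 (N - k0) w) hy)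
        · intro k hk hkne
          exact C.π_pq_ne (C.pq_mul (C.π_mem_pq k (N - k) w) hy)
            (hne k (by simpa using Nat.lt_succ_iff.mp (Finset.mem_range.mp hk)) hkne)
        · intro h
          exact absurd (Finset.mem_range.mpr (Nat.lt_succ_of_le hk0)) h

/-- Projection of a product (homogeneous `w` on the right). -/
theorem π_mul_left (C : ProjCalc Ω) {N P Q a b : ℕ} {x w : Ω}
    (hx : x ∈ C.pq a b) (hw : w ∈ C.G N) {k0 M : ℕ} (hk0 : k0 ≤ N)
    (hM : M = N - k0) (heq1 : P = a + k0) (heq2 : Q = b + (N - k0))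
    (hne : ∀ k ≤ N, k ≠ k0 → (P, Q) ≠ (a + k, b + (N - k))) :
    C.π P Q (x * w) = x * C.π k0 M w := by
  subst hM
  have hdec := C.π_sum N w hw
  calc C.π P Q (x * w)
      = C.π P Q (x * (∑ k ∈ Finset.range (N + 1), C.π k (N - k) w)) := by rw [← hdec]
    _ = ∑ k ∈ Finset.range (N + 1), C.π P Q (x * C.π k (N - k) w) := by
        rw [Finset.mul_sum, map_sum]
    _ = x * C.π k0 (N - k0) w := by
        rw [Finset.sum_eq_single k0]
        · subst heq1 heq2
          exact C.π_pq_eq (C.pq_mul hx (C.π_mem_pq k0 (N - k0) w))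
        · intro k hk hkne
          exact C.π_pq_ne (C.pq_mul hx (C.π_mem_pq k (N - k) w))
            (hne k (by simpa using Nat.lt_succ_iff.mp (Finset.mem_range.mp hk)) hkne)
        · intro h
          exact absurd (Finset.mem_range.mpr (Nat.lt_succ_of_le hk0)) h

end ProjCalc

/-- Let `J` be an integrable almost complex structure on a
differential `*`-calculus `(Ω•A, d, *)`.  Then `∂` and `∂̄` are super-derivations:
for `ξ ∈ Ω^{p,q}A` and `η ∈ Ω^{p',q'}A` one has
`∂(ξ∧η) = ∂ξ ∧ η + (−1)^{p+q} ξ ∧ ∂η` and `∂̄(ξ∧η) = ∂̄ξ ∧ η + (−1)^{p+q} ξ ∧ ∂̄η`. -/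
theorem statement9 {Ω : Type*} [Ring Ω] [Algebra ℂ Ω] (C : ProjCalc Ω)
    (hint : C.Integrable) :
    ∀ (p q p' q' : ℕ), ∀ ξ ∈ C.pq p q, ∀ η ∈ C.pq p' q',
      -- ∂ is a super-derivation
      (C.π (p + p' + 1) (q + q') (C.d (ξ * η)) =
        C.π (p + 1) q (C.d ξ) * η + ((-1 : ℂ) ^ (p + q)) • (ξ * C.π (p' + 1) q' (C.d η)))
      -- ∂̄ is a super-derivation
      ∧ (C.π (p + p') (q + q' + 1) (C.d (ξ * η)) =
        C.π p (q + 1) (C.d ξ) * η + ((-1 : ℂ) ^ (p + q)) • (ξ * C.π p' (q' + 1) (C.d η))) := by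
  intro p q p' q' ξ hξ η hη
  have hdξ : C.d ξ ∈ C.G (p + q + 1) := C.d_mem (p + q) ξ hξ.1
  have hdη : C.d η ∈ C.G (p' + q' + 1) := C.d_mem (p' + q') η hη.1
  have hleib : C.d (ξ * η) = C.d ξ * η + ((-1 : ℂ) ^ (p + q)) • (ξ * C.d η) :=
    C.leibniz (p + q) ξ hξ.1 η
  constructor
  · rw [hleib, map_add, map_smul]
    congr 1
    · exact C.π_mul_right hdξ hη (k0 := p + 1) (by omega) (by omega) (by omega) (by omega)
        (by intro k hk hkne; simp only [ne_eq, Prod.mk.injEq, not_and]; omega)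
    · rw [C.π_mul_left hξ hdη (k0 := p' + 1) (M := q') (by omega) (by omega) (by omega) (by omega)
        (by intro k hk hkne; simp only [ne_eq, Prod.mk.injEq, not_and]; omega)]
  · rw [hleib, map_add, map_smul]
    congr 1
    · exact C.π_mul_right hdξ hη (k0 := p) (by omega) (by omega) (by omega) (by omega)
        (by intro k hk hkne; simp only [ne_eq, Prod.mk.injEq, not_and]; omega)
    · rw [C.π_mul_left hξ hdη (k0 := p') (M := q' + 1) (by omega) (by omega) (by omega) (by omega)
        (by intro k hk hkne; simp only [ne_eq, Prod.mk.injEq, not_and]; omega)]
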